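/- arXiv:1909.08683 — 7 statements merged into one kernel-verified Lean document; each statement's English description precedes it below -/
import Mathlib

section
/- Let E = Q ×_{φ,ψ,θ} A be a central extension which is a latin quandle. Then E is medial if and only if φ(θ(a,b)) + ψ(θ(c,d)) + θ(a*b, c*d) = φ(θ(a,c)) + ψ(θ(b,d)) + θ(a*c, b*d) for all a,b,c,d ∈ Q, assuming Q itself is medial. -/
/-!
The first coordinates of the two sides agree because `Q` is medial. With `p = (a, w)`,
`r = (b, x)`, `s = (c, y)`, `t = (d, z)`, the second coordinate of `(p * r) * (s * t)` is
`φφ w + φψ x + ψφ y + ψψ z` plus the cocycle term `φ θ(a,b) + ψ θ(c,d) + θ(ab, cd)`. Since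
`ψ = 1 - φ`, the maps `φ` and `ψ` commute, so exchanging `r` and `s` leaves the first part unchanged:
mediality is equivalent to the symmetry of the cocycle term under `b ↔ c`.
-/

theorem AddMonoidHom.map_map_comm_of_add_eq_self {A : Type*} [AddCommGroup A] {φ ψ : A →+ A}
    (hsum : ∀ x, φ x + ψ x = x) (x : A) : φ (ψ x) = ψ (φ x) := by
  have hψ : ∀ y, ψ y = y - φ y := fun y => eq_sub_of_add_eq' (hsum y)
  rw [hψ, hψ, map_sub]

section CentralExtension

variable {Q A : Type*} [AddCommGroup A] (q : Q → Q → Q) (φ ψ : A →+ A) (θ : Q → Q → A)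

def centralExt (p r : Q × A) : Q × A :=
  (q p.1 r.1, φ p.2 + ψ r.2 + θ p.1 r.1)

theorem centralExt_centralExt_snd (p r s t : Q × A) :
    (centralExt q φ ψ θ (centralExt q φ ψ θ p r) (centralExt q φ ψ θ s t)).2
      = (φ (φ p.2) + ψ (ψ t.2)) + (φ (ψ r.2) + ψ (φ s.2))
        + (φ (θ p.1 r.1) + ψ (θ s.1 t.1) + θ (q p.1 r.1) (q s.1 t.1)) := by
  simp only [centralExt, map_add]
  abel

theorem centralExt_medial_iff (hmedial : ∀ a b c d, q (q a b) (q c d) = q (q a c) (q b d))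
    (hcomm : ∀ x, φ (ψ x) = ψ (φ x)) :
    (∀ p r s t : Q × A, centralExt q φ ψ θ (centralExt q φ ψ θ p r) (centralExt q φ ψ θ s t)
        = centralExt q φ ψ θ (centralExt q φ ψ θ p s) (centralExt q φ ψ θ r t)) ↔
    (∀ a b c d, φ (θ a b) + ψ (θ c d) + θ (q a b) (q c d)
        = φ (θ a c) + ψ (θ b d) + θ (q a c) (q b d)) := by
  constructor
  · intro h a b c d
    simpa [centralExt_centralExt_snd] using congrArg Prod.snd (h (a, 0) (b, 0) (c, 0) (d, 0))
  · intro h p r s t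
    refine Prod.ext (hmedial p.1 r.1 s.1 t.1) ?_
    rw [centralExt_centralExt_snd, centralExt_centralExt_snd, h, hcomm r.2, hcomm s.2,
      add_comm (ψ (φ r.2))]

end CentralExtension

theorem central_extension_medial_iff_general {Q : Type*} {A : Type*} [AddCommGroup A]
    (q : Q → Q → Q)
    (hmedial : ∀ a b c d, q (q a b) (q c d) = q (q a c) (q b d))
    (φ ψ : A ≃+ A) (θ : Q → Q → A)
    (ext : Q × A → Q × A → Q × A)
    (hext : ∀ p r : Q × A, ext p r = (q p.1 r.1, φ p.2 + ψ r.2 + θ p.1 r.1))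
    (hsum : ∀ x : A, φ x + ψ x = x) :
    (∀ p r s t : Q × A, ext (ext p r) (ext s t) = ext (ext p s) (ext r t)) ↔
    (∀ a b c d, φ (θ a b) + ψ (θ c d) + θ (q a b) (q c d)
        = φ (θ a c) + ψ (θ b d) + θ (q a c) (q b d)) := by
  have hext' : ext = centralExt q φ.toAddMonoidHom ψ.toAddMonoidHom θ :=
    funext₂ fun p r => hext p r
  rw [hext']
  exact centralExt_medial_iff q _ _ θ hmedial
    (AddMonoidHom.map_map_comm_of_add_eq_self (φ := φ.toAddMonoidHom) hsum)

theorem central_extension_medial_iff {Q : Type*} {A : Type*} [AddCommGroup A]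
    (q : Q → Q → Q)
    (hidem : ∀ a, q a a = a)
    (hld : ∀ a b c, q a (q b c) = q (q a b) (q a c))
    (hlbij : ∀ a, Function.Bijective (fun x => q a x))
    (hrbij : ∀ a, Function.Bijective (fun x => q x a))
    (hmedial : ∀ a b c d, q (q a b) (q c d) = q (q a c) (q b d))
    (φ ψ : A ≃+ A) (θ : Q → Q → A)
    (ext : Q × A → Q × A → Q × A)
    (hext : ∀ p r : Q × A, ext p r = (q p.1 r.1, φ p.2 + ψ r.2 + θ p.1 r.1))
    (hsum : ∀ x : A, φ x + ψ x = x)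
    (hθdiag : ∀ a, θ a a = 0)
    (hLD : ∀ a b c, ψ (θ b c) + θ a (q b c) = ψ (θ a c) + φ (θ a b) + θ (q a b) (q a c)) :
    (∀ p r s t : Q × A, ext (ext p r) (ext s t) = ext (ext p s) (ext r t)) ↔
    (∀ a b c d, φ (θ a b) + ψ (θ c d) + θ (q a b) (q c d)
        = φ (θ a c) + ψ (θ b d) + θ (q a c) (q b d)) :=
  central_extension_medial_iff_general q hmedial φ ψ θ ext hext hsum
end

section
/- Let O be an Onoi ring and σ a permutation of {1,...,n}. Then O^σ = (Oⁿ, +, ·_σ, α) with coordinatewise addition and α, and multiplication (a₁,...,aₙ)·_σ(b₁,...,bₙ) = (a_{σ(1)}·b₁, ..., a_{σ(n)}·bₙ), is again an Onoi ring. -/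
structure OnoiRing (O : Type*) [AddCommGroup O] where
  mul : O → O → O
  α : O ≃+ O
  left_distrib : ∀ a b c, mul a (b + c) = mul a b + mul a c
  right_distrib : ∀ a b c, mul (a + b) c = mul a c + mul b c
  char2 : ∀ a : O, a + a = 0
  α_mul : ∀ a b, α (mul a b) = mul (α a) (α b)
  α_sq : ∀ a, α (α a) + α a + a = 0
  mul_α : ∀ a b, mul (α a) b = mul a (α b)

namespace OnoiRing

variable {O : Type*} [AddCommGroup O]

def twistedPi (R : OnoiRing O) {ι : Type*} (σ : ι → ι) : OnoiRing (ι → O) where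
  mul a b i := R.mul (a (σ i)) (b i)
  α := AddEquiv.piCongrRight fun _ => R.α
  left_distrib a b c := funext fun i => R.left_distrib (a (σ i)) (b i) (c i)
  right_distrib a b c := funext fun i => R.right_distrib (a (σ i)) (b (σ i)) (c i)
  char2 a := funext fun i => R.char2 (a i)
  α_mul a b := funext fun i => R.α_mul (a (σ i)) (b i)
  α_sq a := funext fun i => R.α_sq (a i)
  mul_α a b := funext fun i => R.mul_α (a (σ i)) (b i)

end OnoiRing

theorem onoi_perm_power {O : Type*} [AddCommGroup O] (R : OnoiRing O)
    (n : ℕ) (σ : Equiv.Perm (Fin n)) :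
    ∃ S : OnoiRing (Fin n → O),
      (∀ a b : Fin n → O, ∀ i, S.mul a b i = R.mul (a (σ i)) (b i)) ∧
      (∀ a : Fin n → O, ∀ i, S.α a i = R.α (a i)) :=
  ⟨R.twistedPi σ, fun _ _ _ => rfl, fun _ _ => rfl⟩
end

section
/- Let O be an Onoi ring and σ a permutation of {1,...,n}×{1,...,n}. Then the set of n×n matrices over O with entrywise addition, α applied entrywise, and multiplication (a_{i,j})·_σ(b_{i,j}) = (Σ_{k=1}^n a_{σ(i,k)}·b_{k,j})_{i,j}, is an Onoi ring. -/
namespace OnoiRing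

variable {O : Type*} [AddCommGroup O] (R : OnoiRing O) {ι : Type*} [Fintype ι]

-- Each axiom holds entrywise and is additive in each factor, so `σ` need not be a bijection.
def twistedMatrix (σ : ι × ι → ι × ι) : OnoiRing (ι → ι → O) where
  mul a b i j := ∑ k, R.mul (a (σ (i, k)).1 (σ (i, k)).2) (b k j)
  α := AddEquiv.piCongrRight fun _ => AddEquiv.piCongrRight fun _ => R.α
  left_distrib a b c := by
    funext i j
    simp only [Pi.add_apply, R.left_distrib, Finset.sum_add_distrib]
  right_distrib a b c := by
    funext i j
    simp only [Pi.add_apply, R.right_distrib, Finset.sum_add_distrib]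
  char2 a := by
    funext i j
    exact R.char2 (a i j)
  α_mul a b := by
    funext i j
    simp only [AddEquiv.piCongrRight_apply, map_sum, R.α_mul]
  α_sq a := by
    funext i j
    exact R.α_sq (a i j)
  mul_α a b := by
    funext i j
    simp only [AddEquiv.piCongrRight_apply, R.mul_α]

end OnoiRing

theorem onoi_matrix_ring {O : Type*} [AddCommGroup O] (R : OnoiRing O)
    (n : ℕ) (σ : Equiv.Perm (Fin n × Fin n)) :
    ∃ S : OnoiRing (Fin n → Fin n → O),
      (∀ a b : Fin n → Fin n → O, ∀ i j,
        S.mul a b i j = ∑ k : Fin n, R.mul (a (σ (i, k)).1 (σ (i, k)).2) (b k j)) ∧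
      (∀ a : Fin n → Fin n → O, ∀ i j, S.α a i j = R.α (a i j)) :=
  ⟨R.twistedMatrix σ, fun _ _ _ _ => rfl, fun _ _ _ => rfl⟩
end

section
/- Let O₁, O₂ be Onoi rings and μ : O₁³ → O₂ an Onoi mapping. Define θ(a,b) = μ(a, a+b, a+b). Then θ satisfies θ(a,a)=0 and the left-distributivity cocycle condition α₂(θ(b,c)) + θ(a, b*c) = α₂(θ(a,c)) + α₂²(θ(a,b)) + θ(a*b, a*c) for all a,b,c ∈ O₁, where a*b = α₁²(a) + α₁(b). -/
/-!
Both additive groups have exponent 2 and `α² = α + 1`. The Onoi relations let one move every `α₁`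
into the last argument of `μ`, and `α₂ ∘ μ = μ ∘ (1 × 1 × α₁)`, so both sides of the cocycle
condition expand to sums of the terms `μ x y z` and `μ x y (α₁ z)` with `x y z ∈ {a, b, c}`;
their coefficients in `𝔽₂` agree.
-/

namespace OnoiRing

variable {O : Type*} [AddCommGroup O] (R : OnoiRing O)

theorem α_α (x : O) : R.α (R.α x) = R.α x + x := by
  have h : R.α (R.α x) + (R.α x + x) = 0 := by rw [← add_assoc]; exact R.α_sq x
  rw [eq_neg_of_add_eq_zero_left h, neg_eq_of_add_eq_zero_left (R.char2 _)]

end OnoiRing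

structure IsOnoiMapping {O₁ O₂ : Type*} [AddCommGroup O₁] [AddCommGroup O₂]
    (R₁ : OnoiRing O₁) (R₂ : OnoiRing O₂) (μ : O₁ → O₁ → O₁ → O₂) : Prop where
  map_add₁ : ∀ a₁ a₂ b c, μ (a₁ + a₂) b c = μ a₁ b c + μ a₂ b c
  map_add₂ : ∀ a b₁ b₂ c, μ a (b₁ + b₂) c = μ a b₁ c + μ a b₂ c
  map_add₃ : ∀ a b c₁ c₂, μ a b (c₁ + c₂) = μ a b c₁ + μ a b c₂
  map_α_α_α : ∀ a b c, μ (R₁.α a) (R₁.α b) (R₁.α c) = R₂.α (μ a b c)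
  map_α₁ : ∀ a b c, μ (R₁.α a) b c = μ a (R₁.α b) (R₁.α c)
  map_α₂ : ∀ a b c, μ a (R₁.α b) c = μ a b (R₁.α c)

namespace IsOnoiMapping

variable {O₁ O₂ : Type*} [AddCommGroup O₁] [AddCommGroup O₂]
  {R₁ : OnoiRing O₁} {R₂ : OnoiRing O₂} {μ : O₁ → O₁ → O₁ → O₂}

theorem map_zero₃ (hμ : IsOnoiMapping R₁ R₂ μ) (a b : O₁) : μ a b 0 = 0 :=
  map_zero (AddMonoidHom.mk' (μ a b) (hμ.map_add₃ a b))

theorem map_α₁_eq_add (hμ : IsOnoiMapping R₁ R₂ μ) (a b c : O₁) :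
    μ (R₁.α a) b c = μ a b (R₁.α c) + μ a b c := by
  rw [hμ.map_α₁, hμ.map_α₂, R₁.α_α, hμ.map_add₃]

theorem α_apply (hμ : IsOnoiMapping R₁ R₂ μ) (a b c : O₁) :
    R₂.α (μ a b c) = μ a b (R₁.α c) :=
  calc R₂.α (μ a b c) = μ a (R₁.α b + b) (R₁.α c + c) := by
        rw [← hμ.map_α_α_α, hμ.map_α₁, R₁.α_α, R₁.α_α]
    _ = μ a b (R₁.α c) + (μ a b (R₁.α c) + μ a b (R₁.α c)) + (μ a b c + μ a b c) := by
        rw [hμ.map_add₂, hμ.map_add₃, hμ.map_add₃, hμ.map_α₂, hμ.map_α₂, R₁.α_α,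
          hμ.map_add₃]
        abel
    _ = μ a b (R₁.α c) := by rw [R₂.char2, R₂.char2, add_zero, add_zero]

end IsOnoiMapping

theorem onoi_mapping_cocycle {O₁ O₂ : Type*} [AddCommGroup O₁] [AddCommGroup O₂]
    (R₁ : OnoiRing O₁) (R₂ : OnoiRing O₂) (μ : O₁ → O₁ → O₁ → O₂)
    (hlin₁ : ∀ a₁ a₂ b c, μ (a₁ + a₂) b c = μ a₁ b c + μ a₂ b c)
    (hlin₂ : ∀ a b₁ b₂ c, μ a (b₁ + b₂) c = μ a b₁ c + μ a b₂ c)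
    (hlin₃ : ∀ a b c₁ c₂, μ a b (c₁ + c₂) = μ a b c₁ + μ a b c₂)
    (hOM1 : ∀ a b c, μ (R₁.α a) (R₁.α b) (R₁.α c) = R₂.α (μ a b c))
    (hOM2 : ∀ a b c, μ (R₁.α a) b c = μ a (R₁.α b) (R₁.α c))
    (hOM3 : ∀ a b c, μ a (R₁.α b) c = μ a b (R₁.α c))
    (θ : O₁ → O₁ → O₂) (hθ : ∀ a b, θ a b = μ a (a + b) (a + b))
    (star : O₁ → O₁ → O₁) (hstar : ∀ a b, star a b = R₁.α (R₁.α a) + R₁.α b) :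
    (∀ a, θ a a = 0) ∧
    (∀ a b c, R₂.α (θ b c) + θ a (star b c)
        = R₂.α (θ a c) + R₂.α (R₂.α (θ a b)) + θ (star a b) (star a c)) := by
  have hμ : IsOnoiMapping R₁ R₂ μ := ⟨hlin₁, hlin₂, hlin₃, hOM1, hOM2, hOM3⟩
  refine ⟨fun a => by rw [hθ, R₁.char2, hμ.map_zero₃], fun a b c => ?_⟩
  let _ : Module (ZMod 2) O₂ :=
    AddCommGroup.zmodModule fun x => by rw [two_nsmul]; exact R₂.char2 x
  -- scaling by `1 : ZMod 2` makes `match_scalars` compare coefficients in `𝔽₂`, not in `ℕ`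
  apply smul_right_injective O₂ (one_ne_zero (α := ZMod 2))
  simp only [hθ, hstar, R₁.α_α, map_add, hμ.map_add₁, hμ.map_add₂, hμ.map_add₃,
    hμ.map_α₁_eq_add, hμ.map_α₂, hμ.α_apply]
  match_scalars <;> decide
end

section
/- Let O₁, O₂ be Onoi rings, μ : O₁³ → O₂ an Onoi mapping, and θ(a,b) = μ(a,a+b,a+b). If μ satisfies μ(a,b,b) = μ(b,a,a) and μ(a,b,c) = μ(a,c,b) for all a,b,c ∈ O₁, then θ satisfies the mediality cocycle condition α₂²(θ(a,b)) + α₂(θ(c,d)) + θ(a*b, c*d) = α₂²(θ(a,c)) + α₂(θ(b,d)) + θ(a*c, b*d) for all a,b,c,d ∈ O₁, where a*b = α₁²(a)+α₁(b). -/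
/-!
In characteristic 2 the two symmetry hypotheses make `q(u, p) = μ(u, p, p)` additive in `p`
and `c(u) = μ(u, u, u)` additive in `u`, so that `θ(x, y) = c(x) + q(x, y)`. Since `α₁³ = 1`,
the Onoi-mapping relations expand `θ(x * y, z * w)` into `α₂`-twists of `c` and `q` evaluated
at `x, y, z, w`. For the mediality identity the two sides then agree term by term under the swap
`b ↔ c`, except for `q(b, c)` against `q(c, b)`, which are equal by `μ(a, b, b) = μ(b, a, a)`.
-/

theorem OnoiRing.α_α_α {O : Type*} [AddCommGroup O] (R : OnoiRing O) (x : O) :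
    R.α (R.α (R.α x)) = x := by
  linear_combination (norm := abel) R.α_sq (R.α x) - R.α_sq x

namespace OnoiMapping

variable {M N : Type*} [AddCommGroup M] [AddCommGroup N] {μ : M → M → M → N}

theorem diag_add (hlin₂ : ∀ a b₁ b₂ c, μ a (b₁ + b₂) c = μ a b₁ c + μ a b₂ c)
    (hlin₃ : ∀ a b c₁ c₂, μ a b (c₁ + c₂) = μ a b c₁ + μ a b c₂)
    (hsymm : ∀ a b c, μ a b c = μ a c b) (hN : ∀ x : N, x + x = 0) (u p q : M) :
    μ u (p + q) (p + q) = μ u p p + μ u q q := by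
  rw [hlin₂, hlin₃, hlin₃, hsymm u q p]
  linear_combination (norm := abel) hN (μ u p q)

theorem cube_add (hlin₁ : ∀ a₁ a₂ b c, μ (a₁ + a₂) b c = μ a₁ b c + μ a₂ b c)
    (hdiag : ∀ u p q, μ u (p + q) (p + q) = μ u p p + μ u q q)
    (hswap : ∀ a b, μ a b b = μ b a a) (hN : ∀ x : N, x + x = 0) (u v : M) :
    μ (u + v) (u + v) (u + v) = μ u u u + μ v v v := by
  rw [hlin₁, hdiag, hdiag, hswap u v]
  linear_combination (norm := abel) hN (μ v u u)

variable {α₁ : M → M} {α₂ : N → N}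

theorem cube_star (hcube : ∀ u v, μ (u + v) (u + v) (u + v) = μ u u u + μ v v v)
    (hOM1 : ∀ a b c, μ (α₁ a) (α₁ b) (α₁ c) = α₂ (μ a b c)) (x y : M) :
    let X := α₁ (α₁ x) + α₁ y
    μ X X X = α₂ (α₂ (μ x x x)) + α₂ (μ y y y) := by
  simp only [hcube, hOM1]

theorem diag_star (hα₁ : ∀ x, α₁ (α₁ (α₁ x)) = x)
    (hlin₁ : ∀ a₁ a₂ b c, μ (a₁ + a₂) b c = μ a₁ b c + μ a₂ b c)
    (hdiag : ∀ u p q, μ u (p + q) (p + q) = μ u p p + μ u q q)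
    (hOM1 : ∀ a b c, μ (α₁ a) (α₁ b) (α₁ c) = α₂ (μ a b c))
    (hOM2 : ∀ a b c, μ (α₁ a) b c = μ a (α₁ b) (α₁ c)) (x y z w : M) :
    let X := α₁ (α₁ x) + α₁ y
    let Y := α₁ (α₁ z) + α₁ w
    μ X Y Y = α₂ (α₂ (μ x z z)) + α₂ (μ x (α₁ w) (α₁ w)) + μ y z z + α₂ (μ y w w) := by
  dsimp only
  rw [hlin₁, hdiag, hdiag, hOM2 y, hα₁, hOM2 (α₁ x) (α₁ w), hOM1, hOM1, hOM1, hOM1]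
  abel

end OnoiMapping

theorem onoi_mapping_mediality_sufficient_general {O₁ O₂ : Type*} [AddCommGroup O₁] [AddCommGroup O₂]
    (R₁ : OnoiRing O₁) (R₂ : OnoiRing O₂) (μ : O₁ → O₁ → O₁ → O₂)
    (hlin₁ : ∀ a₁ a₂ b c, μ (a₁ + a₂) b c = μ a₁ b c + μ a₂ b c)
    (hlin₂ : ∀ a b₁ b₂ c, μ a (b₁ + b₂) c = μ a b₁ c + μ a b₂ c)
    (hlin₃ : ∀ a b c₁ c₂, μ a b (c₁ + c₂) = μ a b c₁ + μ a b c₂)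
    (hOM1 : ∀ a b c, μ (R₁.α a) (R₁.α b) (R₁.α c) = R₂.α (μ a b c))
    (hOM2 : ∀ a b c, μ (R₁.α a) b c = μ a (R₁.α b) (R₁.α c))
    (θ : O₁ → O₁ → O₂) (hθ : ∀ a b, θ a b = μ a (a + b) (a + b))
    (star : O₁ → O₁ → O₁) (hstar : ∀ a b, star a b = R₁.α (R₁.α a) + R₁.α b)
    (hμ1 : ∀ a b, μ a b b = μ b a a)
    (hμ2 : ∀ a b c, μ a b c = μ a c b) :
    ∀ a b c d, R₂.α (R₂.α (θ a b)) + R₂.α (θ c d) + θ (star a b) (star c d)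
      = R₂.α (R₂.α (θ a c)) + R₂.α (θ b d) + θ (star a c) (star b d) := by
  have hdiag := OnoiMapping.diag_add hlin₂ hlin₃ hμ2 R₂.char2
  have hcube := OnoiMapping.cube_add hlin₁ hdiag hμ1 R₂.char2
  have hθ' : ∀ x y, θ x y = μ x x x + μ x y y := fun x y => by rw [hθ, hdiag]
  have hθstar : ∀ x y z w, θ (star x y) (star z w)
      = R₂.α (R₂.α (μ x x x)) + R₂.α (μ y y y) + (R₂.α (R₂.α (μ x z z))
        + R₂.α (μ x (R₁.α w) (R₁.α w)) + μ y z z + R₂.α (μ y w w)) := fun x y z w => by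
    rw [hθ', hstar, hstar, OnoiMapping.cube_star hcube hOM1,
      OnoiMapping.diag_star R₁.α_α_α hlin₁ hdiag hOM1 hOM2]
  intro a b c d
  simp only [hθstar, hθ', map_add, hμ1 b c]
  abel

theorem onoi_mapping_mediality_sufficient {O₁ O₂ : Type*} [AddCommGroup O₁] [AddCommGroup O₂]
    (R₁ : OnoiRing O₁) (R₂ : OnoiRing O₂) (μ : O₁ → O₁ → O₁ → O₂)
    (hlin₁ : ∀ a₁ a₂ b c, μ (a₁ + a₂) b c = μ a₁ b c + μ a₂ b c)
    (hlin₂ : ∀ a b₁ b₂ c, μ a (b₁ + b₂) c = μ a b₁ c + μ a b₂ c)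
    (hlin₃ : ∀ a b c₁ c₂, μ a b (c₁ + c₂) = μ a b c₁ + μ a b c₂)
    (hOM1 : ∀ a b c, μ (R₁.α a) (R₁.α b) (R₁.α c) = R₂.α (μ a b c))
    (hOM2 : ∀ a b c, μ (R₁.α a) b c = μ a (R₁.α b) (R₁.α c))
    (hOM3 : ∀ a b c, μ a (R₁.α b) c = μ a b (R₁.α c))
    (θ : O₁ → O₁ → O₂) (hθ : ∀ a b, θ a b = μ a (a + b) (a + b))
    (star : O₁ → O₁ → O₁) (hstar : ∀ a b, star a b = R₁.α (R₁.α a) + R₁.α b)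
    (hμ1 : ∀ a b, μ a b b = μ b a a)
    (hμ2 : ∀ a b c, μ a b c = μ a c b) :
    ∀ a b c d, R₂.α (R₂.α (θ a b)) + R₂.α (θ c d) + θ (star a b) (star c d)
      = R₂.α (R₂.α (θ a c)) + R₂.α (θ b d) + θ (star a c) (star b d) :=
  onoi_mapping_mediality_sufficient_general R₁ R₂ μ hlin₁ hlin₂ hlin₃ hOM1 hOM2 θ hθ star hstar hμ1
    hμ2
end

section
/- Let O be an Onoi ring. Define μ : (O²)³ → O by μ((a,b),(c,d),(u,v)) = b·(d·u). Then μ is an Onoi mapping from the direct square O² (with componentwise operations) to O. Moreover, if there exists e ∈ O with e·(e·e) ≠ 0, then μ violates the symmetry identity μ(x,y,z) = μ(x,z,y): indeed μ((0,e),(0,e),(e,0)) = e·(e·e) ≠ 0 = μ((0,e),(e,0),(0,e)). -/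
namespace OnoiRing

variable {O : Type*} [AddCommGroup O] (R : OnoiRing O)

lemma mul_zero (a : O) : R.mul a 0 = 0 := by
  simpa using R.left_distrib a 0 0

lemma zero_mul (a : O) : R.mul 0 a = 0 := by
  simpa using R.right_distrib 0 0 a

end OnoiRing

theorem onoi_mapping_square {O : Type*} [AddCommGroup O] (R : OnoiRing O)
    (μ : O × O → O × O → O × O → O)
    (hμ : ∀ p q r : O × O, μ p q r = R.mul p.2 (R.mul q.2 r.1)) :
    ((∀ p₁ p₂ q r : O × O, μ (p₁ + p₂) q r = μ p₁ q r + μ p₂ q r) ∧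
     (∀ p q₁ q₂ r : O × O, μ p (q₁ + q₂) r = μ p q₁ r + μ p q₂ r) ∧
     (∀ p q r₁ r₂ : O × O, μ p q (r₁ + r₂) = μ p q r₁ + μ p q r₂) ∧
     (∀ p q r : O × O, μ (R.α p.1, R.α p.2) (R.α q.1, R.α q.2) (R.α r.1, R.α r.2)
        = R.α (μ p q r)) ∧
     (∀ p q r : O × O, μ (R.α p.1, R.α p.2) q r
        = μ p (R.α q.1, R.α q.2) (R.α r.1, R.α r.2)) ∧
     (∀ p q r : O × O, μ p (R.α q.1, R.α q.2) r = μ p q (R.α r.1, R.α r.2))) ∧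
    (∀ e : O, R.mul e (R.mul e e) ≠ 0 →
      μ (0, e) (0, e) (e, 0) = R.mul e (R.mul e e) ∧
      R.mul e (R.mul e e) ≠ 0 ∧
      μ (0, e) (e, 0) (0, e) = 0) := by
  refine ⟨⟨fun p₁ p₂ q r => ?_, fun p q₁ q₂ r => ?_, fun p q r₁ r₂ => ?_,
    fun p q r => ?_, fun p q r => ?_, fun p q r => ?_⟩, fun e he => ⟨hμ _ _ _, he, ?_⟩⟩
  · simp only [hμ, Prod.snd_add, R.right_distrib]
  · simp only [hμ, Prod.snd_add, R.right_distrib, R.left_distrib]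
  · simp only [hμ, Prod.fst_add, R.left_distrib]
  · simp only [hμ, R.α_mul]
  · simp only [hμ, R.mul_α, R.α_mul]
  · simp only [hμ, R.mul_α]
  · simp only [hμ, R.zero_mul, R.mul_zero]
end

section
/- Let A = Z_{2^{k₁}} × Z_{2^{k₂}} × ... × Z_{2^{kₙ}} with k₁ > k₂ ≥ ... ≥ kₙ ≥ 1 and n ≥ 2. Then for every automorphism ψ of A, the endomorphism 1-ψ is not bijective. -/
/-!
Let `m = k₀` be the largest exponent. Multiplication by `2 ^ (m - 1)` kills every factor except
the first, where its image is the subgroup `{0, 2 ^ (m - 1)}` of order two. Hence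
`2 ^ (m - 1) • A = {0, x}` with `x = 2 ^ (m - 1) • e₀`; every automorphism preserves this
subgroup and `0`, so it fixes `x`, and `x ≠ 0` lies in the kernel of `1 - ψ`.
-/

lemma mul_intCast_eq_zero_or_self {R : Type*} [Ring R] {c : R} (hc : 2 * c = 0) (z : ℤ) :
    c * z = 0 ∨ c * z = c := by
  have hz : (z : R) = 2 * (z / 2 : ℤ) + (z % 2 : ℤ) := by
    rw [← Int.cast_ofNat, ← Int.cast_mul, ← Int.cast_add, Int.mul_ediv_add_emod]
  have hc' : c * 2 = 0 := by rw [← hc, (Commute.ofNat_left 2 c).eq]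
  rw [hz, mul_add, ← mul_assoc, hc', zero_mul, zero_add]
  rcases Int.emod_two_eq_zero_or_one z with h | h <;> simp [h]

lemma ZMod.mul_eq_zero_or_self {n : ℕ} {c : ZMod n} (hc : 2 * c = 0) (a : ZMod n) :
    c * a = 0 ∨ c * a = c := by
  simpa only [ZMod.intCast_zmod_cast] using mul_intCast_eq_zero_or_self hc (a.cast : ℤ)

lemma Pi.eq_single_of_forall_ne {ι : Type*} [DecidableEq ι] {M : ι → Type*} [∀ i, Zero (M i)]
    {f : ∀ i, M i} {i₀ : ι} (h : ∀ i, i ≠ i₀ → f i = 0) : f = Pi.single i₀ (f i₀) := by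
  ext i
  by_cases hi : i = i₀
  · subst hi; simp
  · simp [hi, h i hi]

lemma AddEquiv.map_nsmul_eq_self {G : Type*} [AddMonoid G] (ψ : G ≃+ G) {N : ℕ} {e : G}
    (hne : N • e ≠ 0) (h : ∀ y : G, N • y = 0 ∨ N • y = N • e) : ψ (N • e) = N • e := by
  rw [map_nsmul]
  refine (h (ψ e)).resolve_left fun h0 => hne (ψ.injective ?_)
  rw [map_nsmul, h0, map_zero]

lemma ZMod.two_pow_pred_ne_zero {m : ℕ} (hm : 1 ≤ m) : (2 ^ (m - 1) : ZMod (2 ^ m)) ≠ 0 := by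
  have : ¬ 2 ^ m ∣ 2 ^ (m - 1) := by
    rw [Nat.pow_dvd_pow_iff_le_right (by norm_num)]
    omega
  rwa [← ZMod.natCast_eq_zero_iff, Nat.cast_pow, Nat.cast_ofNat] at this

section TwoPowProduct

variable {ι : Type*} [DecidableEq ι] (k : ι → ℕ) (i₀ : ι)

lemma two_pow_pred_nsmul_single_ne_zero (hm : 1 ≤ k i₀) :
    2 ^ (k i₀ - 1) • (Pi.single i₀ 1 : ∀ i, ZMod (2 ^ k i)) ≠ 0 := by
  rw [← Pi.single_smul, nsmul_one]
  exact fun h => ZMod.two_pow_pred_ne_zero hm (by simpa using congrFun h i₀)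

lemma two_pow_pred_nsmul_eq_zero_or (hmax : ∀ i, i ≠ i₀ → k i < k i₀)
    (y : ∀ i, ZMod (2 ^ k i)) :
    2 ^ (k i₀ - 1) • y = 0 ∨ 2 ^ (k i₀ - 1) • y = 2 ^ (k i₀ - 1) • Pi.single i₀ 1 := by
  have hoff : ∀ i, i ≠ i₀ → (2 ^ (k i₀ - 1) • y) i = 0 := fun i hi => by
    have hdvd : 2 ^ k i ∣ 2 ^ (k i₀ - 1) := Nat.pow_dvd_pow 2 (by grind)
    rw [Pi.smul_apply, nsmul_eq_mul, (ZMod.natCast_eq_zero_iff _ _).2 hdvd, zero_mul]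
  have hc : 2 * (2 ^ (k i₀ - 1) : ZMod (2 ^ k i₀)) = 0 := by
    have hdvd : 2 ^ k i₀ ∣ 2 * 2 ^ (k i₀ - 1) := by
      rw [← pow_succ']
      exact Nat.pow_dvd_pow 2 (by omega)
    exact_mod_cast (ZMod.natCast_eq_zero_iff _ _).2 hdvd
  rw [Pi.eq_single_of_forall_ne hoff, ← Pi.single_smul, nsmul_one, Pi.smul_apply, nsmul_eq_mul]
  rcases ZMod.mul_eq_zero_or_self hc (y i₀) with h | h
  · left; simp [h]
  · right; simp [h]

end TwoPowProduct

theorem no_admissible_automorphism {n : ℕ} (hn : 2 ≤ n) (k : Fin n → ℕ)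
    (hmax : ∀ i : Fin n, i ≠ ⟨0, by omega⟩ → k i < k ⟨0, by omega⟩)
    (ψ : (∀ i : Fin n, ZMod (2 ^ k i)) ≃+ (∀ i : Fin n, ZMod (2 ^ k i))) :
    ¬ Function.Bijective (fun x : ∀ i : Fin n, ZMod (2 ^ k i) => x - ψ x) := by
  intro hbij
  set i₀ : Fin n := ⟨0, by omega⟩
  have hm : 1 ≤ k i₀ := by
    have := hmax ⟨1, by omega⟩ (by simp [i₀, Fin.ext_iff])
    omega
  set x := 2 ^ (k i₀ - 1) • (Pi.single i₀ 1 : ∀ i, ZMod (2 ^ k i))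
  have hx : x ≠ 0 := two_pow_pred_nsmul_single_ne_zero k i₀ hm
  have hfix : ψ x = x := ψ.map_nsmul_eq_self hx (two_pow_pred_nsmul_eq_zero_or k i₀ hmax)
  exact hx (hbij.injective (by simp [hfix]))
end
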